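/- Let Z be an n-dimensional supersolvable Zinbiel algebra whose maximal abelian subalgebras have dimension n−2 (so α(Z) = n−2). Then β(Z) = n−2 or β(Z) = n−3. -/

import Mathlib

/-!
The flag of ideals of a supersolvable Zinbiel algebra is a central series, so `Z` is nilpotent,
and in a nilpotent algebra `W ≤ A + W²` with `A` abelian forces `W ≤ A`. If `Z² ⊆ A`, then `A` is
an abelian ideal. Otherwise `K = A + Z²` is a hyperplane with `K² ⊆ A`; fix `x ∉ K`. A product
`x a₁` or `a₀ x` outside `A` spans `K` over `A`, and the Zinbiel identity then gives `Z² A = 0`.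
By maximality of `A`, `Z² A = 0` forces `x a + a x ∈ A` for all `a ∈ A`. Hence if `x A ⊆ A`, also
`A x ⊆ A` and `A` is an ideal; otherwise `{a ∈ A | x a ∈ A}` is an abelian ideal of codimension
one in `A`.
-/

variable {F : Type*} [Field F] {Z : Type*} [AddCommGroup Z] [Module F Z]

/-- `A` is a subalgebra of the algebra with multiplication `b`. -/
def IsSubalg (b : Z →ₗ[F] Z →ₗ[F] Z) (A : Submodule F Z) : Prop :=
  ∀ x ∈ A, ∀ y ∈ A, b x y ∈ A

/-- `A` is abelian: all products of elements of `A` vanish. -/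
def IsAbelian (b : Z →ₗ[F] Z →ₗ[F] Z) (A : Submodule F Z) : Prop :=
  ∀ x ∈ A, ∀ y ∈ A, b x y = 0

/-- `A` is a two-sided ideal. -/
def IsIdeal (b : Z →ₗ[F] Z →ₗ[F] Z) (A : Submodule F Z) : Prop :=
  ∀ z : Z, ∀ x ∈ A, b z x ∈ A ∧ b x z ∈ A

open Module Submodule

def IsZinbiel (b : Z →ₗ[F] Z →ₗ[F] Z) : Prop :=
  ∀ x y z : Z, b (b x y) z = b x (b y z) + b x (b z y)

def IsCentralChain (b : Z →ₗ[F] Z →ₗ[F] Z) (C : ℕ → Submodule F Z) (n : ℕ) : Prop :=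
  ∀ i < n, ∀ w ∈ C (i + 1), ∀ u, b u w ∈ C i ∧ b w u ∈ C i

theorem Submodule.exists_mkQ_eq_smul_of_mem_sup_span_singleton {p : Submodule F Z} {e w : Z}
    (h : w ∈ p ⊔ span F {e}) : ∃ t : F, p.mkQ w = t • p.mkQ e := by
  obtain ⟨c, hc, y, hy, rfl⟩ := mem_sup.mp h
  obtain ⟨t, rfl⟩ := mem_span_singleton.mp hy
  exact ⟨t, by simp [(Submodule.Quotient.mk_eq_zero p).mpr hc]⟩

theorem Submodule.mkQ_eq_smul_mkQ_iff {p : Submodule F Z} {w e : Z} {t : F} :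
    p.mkQ w = t • p.mkQ e ↔ w - t • e ∈ p := by
  rw [← map_smul, mkQ_apply, mkQ_apply, Submodule.Quotient.eq]

theorem Submodule.eq_sup_span_singleton_of_finrank_le [FiniteDimensional F Z]
    {p q : Submodule F Z} {e : Z} (hpq : p ≤ q) (he : e ∈ q) (hep : e ∉ p)
    (h : finrank F q ≤ finrank F p + 1) : q = p ⊔ span F {e} :=
  (eq_of_le_of_finrank_le (sup_le hpq ((span_singleton_le_iff_mem e q).mpr he))
    (by rwa [finrank_sup_span_singleton hep])).symm

theorem finrank_inf_comap_add_one [FiniteDimensional F Z] {f : Z →ₗ[F] Z}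
    {A K : Submodule F Z} (hAK : A ≤ K) (hK : finrank F K ≤ finrank F A + 1)
    (hfK : ∀ a ∈ A, f a ∈ K) {a₁ : Z} (ha₁ : a₁ ∈ A) (hfa₁ : f a₁ ∉ A) :
    finrank F ↥(A ⊓ A.comap f) + 1 = finrank F A := by
  have hKeq := eq_sup_span_singleton_of_finrank_le hAK (hfK a₁ ha₁) hfa₁ hK
  have ha₁B : a₁ ∉ A ⊓ A.comap f := fun h => hfa₁ h.2
  suffices A = A ⊓ A.comap f ⊔ span F {a₁} by
    rw [this, finrank_sup_span_singleton ha₁B, ← this]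
  refine le_antisymm (fun a ha => ?_) (sup_le inf_le_left ((span_singleton_le_iff_mem _ _).mpr ha₁))
  obtain ⟨t, ht⟩ := exists_mkQ_eq_smul_of_mem_sup_span_singleton (hKeq ▸ hfK a ha)
  rw [mkQ_eq_smul_mkQ_iff, ← map_smul, ← map_sub] at ht
  have hB : a - t • a₁ ∈ A ⊓ A.comap f := ⟨sub_mem ha (smul_mem _ _ ha₁), ht⟩
  simpa using add_mem (mem_sup_left hB) (mem_sup_right (smul_mem _ t (mem_span_singleton_self a₁)))

section Ideals

variable {b : Z →ₗ[F] Z →ₗ[F] Z}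

theorem IsIdeal.mkQ_mul_eq {I : Submodule F Z} (hI : IsIdeal b I) {w e : Z} {t : F}
    (h : I.mkQ w = t • I.mkQ e) (u : Z) :
    I.mkQ (b u w) = t • I.mkQ (b u e) ∧ I.mkQ (b w u) = t • I.mkQ (b e u) := by
  rw [mkQ_eq_smul_mkQ_iff] at h
  have hu := hI u _ h
  simp only [map_sub, map_smul, LinearMap.sub_apply, LinearMap.smul_apply] at hu
  simpa only [mkQ_eq_smul_mkQ_iff] using hu

theorem isIdeal_of_sup_span_singleton {B K : Submodule F Z} {x : Z}
    (hKx : K ⊔ span F {x} = ⊤) (hK : ∀ k ∈ K, ∀ w ∈ B, b k w ∈ B ∧ b w k ∈ B)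
    (hx : ∀ w ∈ B, b x w ∈ B ∧ b w x ∈ B) : IsIdeal b B := by
  intro z w hw
  have : K ⊔ span F {x} ≤ B.comap (b.flip w) ⊓ B.comap (b w) :=
    sup_le (fun k hk => hK k hk w hw) ((span_singleton_le_iff_mem _ _).mpr (hx w hw))
  exact this (hKx ▸ mem_top)

theorem forall_mul_eq_zero_of_le_sup_span_singleton {A K : Submodule F Z} {k₀ : Z}
    (hab : IsAbelian b A) (hK : K ≤ A ⊔ span F {k₀}) (hk₀ : ∀ a ∈ A, b k₀ a = 0) :
    ∀ k ∈ K, ∀ a ∈ A, b k a = 0 := by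
  intro k hk a ha
  have : A ⊔ span F {k₀} ≤ LinearMap.ker (b.flip a) :=
    sup_le (fun a' ha' => hab a' ha' a ha) ((span_singleton_le_iff_mem _ _).mpr (hk₀ a ha))
  exact this (hK hk)

theorem isAbelian_sup_span_singleton {A : Submodule F Z} {s : Z} (hab : IsAbelian b A)
    (hsA : ∀ a ∈ A, b a s = 0 ∧ b s a = 0) (hss : b s s = 0) :
    IsAbelian b (A ⊔ span F {s}) := by
  intro p hp q hq
  obtain ⟨a, ha, _, hs, rfl⟩ := mem_sup.mp hp
  obtain ⟨t, rfl⟩ := mem_span_singleton.mp hs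
  obtain ⟨a', ha', _, hs', rfl⟩ := mem_sup.mp hq
  obtain ⟨t', rfl⟩ := mem_span_singleton.mp hs'
  simp [hab a ha a' ha', (hsA a ha).1, (hsA a' ha').2, hss]

end Ideals

section CentralChain

variable {b : Z →ₗ[F] Z →ₗ[F] Z} {I : Submodule F Z} {e : Z}

/-- On the one-dimensional quotient `(I + F e) / I` left multiplication by `u` acts by a scalar
`μ`, and the Zinbiel identity for `(u e) u` forces `μ² = 0`. -/
theorem IsZinbiel.mul_mem_of_isIdeal_sup_span_singleton_left (hZ : IsZinbiel b)
    (hI : IsIdeal b I) (hJ : IsIdeal b (I ⊔ span F {e})) (he : e ∉ I) (u : Z) {w : Z}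
    (hw : w ∈ I ⊔ span F {e}) : b u w ∈ I := by
  have heJ : e ∈ I ⊔ span F {e} := mem_sup_right (mem_span_singleton_self e)
  obtain ⟨μ, hμ⟩ := exists_mkQ_eq_smul_of_mem_sup_span_singleton (hJ u e heJ).1
  obtain ⟨ν, hν⟩ := exists_mkQ_eq_smul_of_mem_sup_span_singleton (hJ u e heJ).2
  have h := congrArg I.mkQ (hZ u e u)
  rw [map_add, (hI.mkQ_mul_eq hμ u).2, (hI.mkQ_mul_eq hν u).1, (hI.mkQ_mul_eq hμ u).1, hν, hμ]
    at h
  have hμ0 : (μ * μ) • I.mkQ e = 0 := by linear_combination (norm := module) -h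
  have : μ = 0 := by simpa [mkQ_apply, Submodule.Quotient.mk_eq_zero, he] using hμ0
  have hue : b u e ∈ I := by simpa [this, mkQ_apply, Submodule.Quotient.mk_eq_zero] using hμ
  exact (sup_le (fun x hx => (hI u x hx).1) ((span_singleton_le_iff_mem _ _).mpr hue) :
    I ⊔ span F {e} ≤ I.comap (b u)) hw

/-- Right multiplication by `e` acts on `(I + F e) / I` by a scalar `ν(u)` with
`ν(u v) + ν(v u) = ν(u) ν(v)`, so `ν(u) ≠ 0` forces `ν(u u) ≠ 0`; iterating reaches `ν(0) = 0`. -/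
theorem IsZinbiel.mul_mem_of_isIdeal_sup_span_singleton_right (hZ : IsZinbiel b)
    (hI : IsIdeal b I) (hJ : IsIdeal b (I ⊔ span F {e})) (he : e ∉ I)
    (hnil : ∀ u, ∃ k, (fun w => b w w)^[k] u = 0) (u : Z) {w : Z}
    (hw : w ∈ I ⊔ span F {e}) : b w u ∈ I := by
  have heJ : e ∈ I ⊔ span F {e} := mem_sup_right (mem_span_singleton_self e)
  choose ν hν using fun u => exists_mkQ_eq_smul_of_mem_sup_span_singleton (hJ u e heJ).2
  have hπe : I.mkQ e ≠ 0 := by simpa [mkQ_apply, Submodule.Quotient.mk_eq_zero] using he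
  have hν_mul : ∀ v w, ν (b v w) + ν (b w v) = ν v * ν w := by
    intro v w
    have h := congrArg I.mkQ (hZ e v w)
    rw [map_add, (hI.mkQ_mul_eq (hν v) w).2, hν, hν, hν] at h
    refine smul_left_injective F hπe ?_
    simp only
    linear_combination (norm := module) -h
  have hν_sq : ∀ v, ν v ≠ 0 → ν (b v v) ≠ 0 := fun v hv h0 =>
    hv (mul_self_eq_zero.mp (by rw [← hν_mul, h0, add_zero]))
  have hν_zero : ν 0 = 0 := by
    have := hν 0
    rw [map_zero, map_zero, eq_comm, smul_eq_zero] at this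
    exact this.resolve_right hπe
  have hνu : ν u = 0 := by
    by_contra hνu
    obtain ⟨k, hk⟩ := hnil u
    have : ∀ j, ν ((fun w => b w w)^[j] u) ≠ 0 := by
      intro j
      induction j with
      | zero => exact hνu
      | succ j ih => rw [Function.iterate_succ_apply']; exact hν_sq _ ih
    exact this k (hk ▸ hν_zero)
  have heu : b e u ∈ I := by simpa [hνu, mkQ_apply, Submodule.Quotient.mk_eq_zero] using hν u
  exact (sup_le (fun x hx => (hI u x hx).2) ((span_singleton_le_iff_mem _ _).mpr heu) :
    I ⊔ span F {e} ≤ I.comap (b.flip u)) hw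

theorem iterate_mul_self_eq_zero {C : ℕ → Submodule F Z} {n : ℕ} (hC0 : C 0 = ⊥)
    (hCn : C n = ⊤) (hleft : ∀ i < n, ∀ w ∈ C (i + 1), ∀ u, b u w ∈ C i) (u : Z) :
    (fun w => b w w)^[n] u = 0 := by
  have : ∀ k ≤ n, (fun w => b w w)^[k] u ∈ C (n - k) := by
    intro k hk
    induction k with
    | zero => simp [hCn]
    | succ k ih =>
      rw [Function.iterate_succ_apply']
      have hk' : n - k = n - (k + 1) + 1 := by omega
      exact hleft _ (by omega) _ (hk' ▸ ih (by omega)) _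
  simpa [hC0] using this n le_rfl

theorem IsZinbiel.isCentralChain [FiniteDimensional F Z] (hZ : IsZinbiel b)
    {C : ℕ → Submodule F Z} (hC0 : C 0 = ⊥) (hCtop : C (finrank F Z) = ⊤)
    (hmono : ∀ i, i < finrank F Z → C i < C (i + 1))
    (hdim : ∀ i ≤ finrank F Z, finrank F (C i) = i)
    (hideal : ∀ i ≤ finrank F Z, IsIdeal b (C i)) : IsCentralChain b C (finrank F Z) := by
  have hstep : ∀ i < finrank F Z, ∃ e ∉ C i, C (i + 1) = C i ⊔ span F {e} := by
    intro i hi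
    obtain ⟨e, he, heC⟩ := SetLike.exists_of_lt (hmono i hi)
    exact ⟨e, heC, eq_sup_span_singleton_of_finrank_le (hmono i hi).le he heC
      (by rw [hdim _ hi, hdim _ hi.le])⟩
  have hleft : ∀ i < finrank F Z, ∀ w ∈ C (i + 1), ∀ u, b u w ∈ C i := fun i hi w hw u => by
    obtain ⟨e, he, hCe⟩ := hstep i hi
    exact hZ.mul_mem_of_isIdeal_sup_span_singleton_left (hideal i hi.le) (hCe ▸ hideal _ hi) he u
      (hCe ▸ hw)
  intro i hi w hw u
  obtain ⟨e, he, hCe⟩ := hstep i hi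
  exact ⟨hleft i hi w hw u, hZ.mul_mem_of_isIdeal_sup_span_singleton_right (hideal i hi.le)
    (hCe ▸ hideal _ hi) he (fun v => ⟨_, iterate_mul_self_eq_zero hC0 hCtop hleft v⟩) u
    (hCe ▸ hw)⟩

end CentralChain

section Nilpotent

variable {b : Z →ₗ[F] Z →ₗ[F] Z} {C : ℕ → Submodule F Z} {A : Submodule F Z}

/-- As `A` is abelian and the chain is central, products of elements of `A + (C (i + 1) ∩ W)` lie
in `C i ∩ W`, so `W ≤ A + W²` pushes `W` down the chain into `A`. -/
theorem IsCentralChain.le_of_le_sup_map₂ (hC : IsCentralChain b C (finrank F Z))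
    (hC0 : C 0 = ⊥) (hCtop : C (finrank F Z) = ⊤) (hab : IsAbelian b A) {W : Submodule F Z}
    (hW : IsSubalg b W) (hAW : A ≤ W) (h : W ≤ A ⊔ map₂ b W W) : W ≤ A := by
  have key : ∀ i ≤ finrank F Z, W ≤ A ⊔ (C i ⊓ W) := by
    intro i hi
    refine Nat.decreasingInduction (motive := fun i _ => W ≤ A ⊔ (C i ⊓ W)) ?_ ?_ hi
    · intro i hi ih
      refine h.trans (sup_le le_sup_left (map₂_le.mpr fun u hu v hv => ?_))
      obtain ⟨a, ha, c, hc, rfl⟩ := mem_sup.mp (ih hu)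
      obtain ⟨a', ha', c', hc', rfl⟩ := mem_sup.mp (ih hv)
      have hprod : b (a + c) (a' + c') = b a c' + b c a' + b c c' := by
        simp only [map_add, LinearMap.add_apply, hab a ha a' ha', zero_add]; abel
      rw [hprod]
      refine mem_sup_right (add_mem (add_mem ?_ ?_) ?_)
      · exact ⟨(hC i hi c' hc'.1 a).1, hW a (hAW ha) c' hc'.2⟩
      · exact ⟨(hC i hi c hc.1 a').2, hW c hc.2 a' (hAW ha')⟩
      · exact ⟨(hC i hi c' hc'.1 c).1, hW c hc.2 c' hc'.2⟩
    · rw [hCtop, top_inf_eq]; exact le_sup_right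
  simpa [hC0] using key 0 (Nat.zero_le _)

theorem IsCentralChain.finrank_sup_map₂_top [FiniteDimensional F Z]
    (hC : IsCentralChain b C (finrank F Z)) (hC0 : C 0 = ⊥) (hCtop : C (finrank F Z) = ⊤) (hab : IsAbelian b A)
    (hdimA : finrank F A + 2 = finrank F Z) (hZA : ¬ map₂ b ⊤ ⊤ ≤ A) :
    finrank F ↥(A ⊔ map₂ b ⊤ ⊤) = finrank F A + 1 := by
  have hAK : A < A ⊔ map₂ b ⊤ ⊤ := left_lt_sup.mpr hZA
  have hKtop : A ⊔ map₂ b ⊤ ⊤ < ⊤ := by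
    refine lt_top_iff_ne_top.mpr fun htop => ?_
    have := hC.le_of_le_sup_map₂ hC0 hCtop hab (fun _ _ _ _ => mem_top) le_top htop.ge
    have := finrank_le A
    rw [top_le_iff.mp ‹⊤ ≤ A›, finrank_top] at hdimA
    omega
  have h₁ := finrank_lt_finrank_of_lt hAK
  have h₂ := finrank_lt_finrank_of_lt hKtop
  rw [finrank_top] at h₂
  omega

theorem IsCentralChain.map₂_le_of_finrank_le [FiniteDimensional F Z]
    (hC : IsCentralChain b C (finrank F Z)) (hC0 : C 0 = ⊥) (hCtop : C (finrank F Z) = ⊤) (hab : IsAbelian b A) {K : Submodule F Z}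
    (hK : IsSubalg b K) (hAK : A < K) (hKA : finrank F K ≤ finrank F A + 1) :
    map₂ b K K ≤ A := by
  have hLK : A ⊔ map₂ b K K ≤ K := sup_le hAK.le (map₂_le.mpr hK)
  have hLK' : A ⊔ map₂ b K K < K := hLK.lt_of_ne fun h =>
    hAK.not_ge (hC.le_of_le_sup_map₂ hC0 hCtop hab hK hAK.le h.ge)
  have := finrank_lt_finrank_of_lt hLK'
  have hAL := eq_of_le_of_finrank_le (le_sup_left : A ≤ A ⊔ map₂ b K K) (by omega)
  exact hAL ▸ le_sup_right

end Nilpotent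

section MaximalAbelian

variable [FiniteDimensional F Z] {b : Z →ₗ[F] Z →ₗ[F] Z} {A : Submodule F Z}

theorem mem_of_isAbelian_sup_span_singleton
    (hmax : ∀ S : Submodule F Z, IsSubalg b S → IsAbelian b S → finrank F S ≤ finrank F A)
    {s : Z} (h : IsAbelian b (A ⊔ span F {s})) : s ∈ A := by
  by_contra hs
  have := hmax _ (fun p hp q hq => h p hp q hq ▸ zero_mem _) h
  rw [finrank_sup_span_singleton hs] at this
  omega

/-- If `Z² A = 0`, then `s = x a + a x` is annihilated by `Z` on the left (Zinbiel:
`u s = (u x) a`) and annihilates `A` on the right, so `A + F s` is abelian. -/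
theorem IsZinbiel.mul_add_mul_mem (hZ : IsZinbiel b) (hab : IsAbelian b A)
    (hmax : ∀ S : Submodule F Z, IsSubalg b S → IsAbelian b S → finrank F S ≤ finrank F A)
    (hZ2A : ∀ u v, ∀ a ∈ A, b (b u v) a = 0) (x : Z) {a : Z} (ha : a ∈ A) :
    b x a + b a x ∈ A := by
  have hs : ∀ u, b u (b x a + b a x) = 0 := fun u => by
    rw [map_add, ← hZ u x a]; exact hZ2A u x a ha
  refine mem_of_isAbelian_sup_span_singleton hmax (isAbelian_sup_span_singleton hab
    (fun a' ha' => ⟨hs a', ?_⟩) (hs _))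
  rw [map_add, LinearMap.add_apply, hZ2A x a a' ha', hZ2A a x a' ha', add_zero]

variable {K : Submodule F Z} {x : Z}

theorem IsZinbiel.mul_mem_of_forall_mul_mem (hZ : IsZinbiel b) (hab : IsAbelian b A)
    (hmax : ∀ S : Submodule F Z, IsSubalg b S → IsAbelian b S → finrank F S ≤ finrank F A)
    (hAK : A ≤ K) (hK : finrank F K ≤ finrank F A + 1) (hprod : ∀ u v, b u v ∈ K)
    (hxA : ∀ a ∈ A, b x a ∈ A) {a₀ : Z} (ha₀ : a₀ ∈ A) : b a₀ x ∈ A := by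
  by_contra hk₀
  have hKeq := eq_sup_span_singleton_of_finrank_le hAK (hprod a₀ x) hk₀ hK
  have ha₀k₀ : b a₀ (b a₀ x) = 0 := by
    have h := hZ a₀ a₀ x
    rwa [hab a₀ ha₀ a₀ ha₀, hab a₀ ha₀ _ (hxA a₀ ha₀), map_zero, LinearMap.zero_apply, add_zero,
      eq_comm] at h
  have ha₀K : K ≤ LinearMap.ker (b a₀) :=
    hKeq ▸ sup_le (hab a₀ ha₀) ((span_singleton_le_iff_mem _ _).mpr ha₀k₀)
  have hKA := forall_mul_eq_zero_of_le_sup_span_singleton hab hKeq.le fun a _ => by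
    rw [hZ a₀ x a, ha₀K (hprod x a), ha₀K (hprod a x), add_zero]
  have := hZ.mul_add_mul_mem hab hmax (fun u v => hKA _ (hprod u v)) x ha₀
  exact hk₀ (by simpa using sub_mem this (hxA a₀ ha₀))

theorem IsZinbiel.forall_mul_eq_zero_of_mul_notMem (hZ : IsZinbiel b) (hab : IsAbelian b A)
    (hAK : A ≤ K) (hK : finrank F K ≤ finrank F A + 1) (hprod : ∀ u v, b u v ∈ K)
    {a₁ : Z} (ha₁ : a₁ ∈ A) (hxa₁ : b x a₁ ∉ A) : ∀ k ∈ K, ∀ a ∈ A, b k a = 0 :=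
  forall_mul_eq_zero_of_le_sup_span_singleton hab
    (eq_sup_span_singleton_of_finrank_le hAK (hprod x a₁) hxa₁ hK).le fun a ha => by
      rw [hZ x a₁ a, hab a₁ ha₁ a ha, hab a ha a₁ ha₁, map_zero, add_zero]

theorem IsZinbiel.isIdeal_inf_comap (hZ : IsZinbiel b) (hab : IsAbelian b A)
    (hmax : ∀ S : Submodule F Z, IsSubalg b S → IsAbelian b S → finrank F S ≤ finrank F A)
    (hKx : K ⊔ span F {x} = ⊤) (hAK : A ≤ K) (hprod : ∀ u v, b u v ∈ K)
    (hK2 : ∀ u ∈ K, ∀ v ∈ K, b u v ∈ A) (hKA : ∀ k ∈ K, ∀ a ∈ A, b k a = 0) :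
    IsIdeal b (A ⊓ A.comap (b x)) := by
  have hZ2A : ∀ u v, ∀ a ∈ A, b (b u v) a = 0 := fun u v => hKA _ (hprod u v)
  have hstar : ∀ a ∈ A, b x a + b a x ∈ A := fun a => hZ.mul_add_mul_mem hab hmax hZ2A x
  have hxax : ∀ a ∈ A, b (b x a) x = 0 := fun a ha => by
    rw [hZ x a x, add_comm, ← hZ x x a]; exact hZ2A x x a ha
  have hxxa : ∀ a ∈ A, b x (b x a) + b x (b a x) = 0 := fun a ha => by
    rw [← hZ x x a]; exact hZ2A x x a ha
  have hxB : ∀ w ∈ A ⊓ A.comap (b x), b x w ∈ A ⊓ A.comap (b x) := fun w ⟨_, hxw⟩ =>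
    ⟨hxw, by simpa [hxax w ‹_›] using hstar _ hxw⟩
  refine isIdeal_of_sup_span_singleton hKx (fun k hk w ⟨hwA, hxw⟩ => ⟨?_, ?_⟩)
    (fun w hw => ⟨hxB w hw, ?_⟩)
  · rw [hKA k hk w hwA]; exact zero_mem _
  · refine ⟨hK2 w (hAK hwA) k hk, ?_⟩
    have : b x (b w k) = b (b x w) k := by rw [hZ x w k, hKA k hk w hwA, map_zero, add_zero]
    exact (this ▸ hK2 _ (hAK hxw) k hk : b x (b w k) ∈ A)
  · obtain ⟨hwA, hxw⟩ := hw
    have hwx : b w x ∈ A := by simpa using sub_mem (hstar w hwA) hxw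
    refine ⟨hwx, show b x (b w x) ∈ A from ?_⟩
    rw [eq_neg_of_add_eq_zero_right (hxxa w hwA)]
    exact neg_mem (hxB w ⟨hwA, hxw⟩).2

end MaximalAbelian

theorem stmt5 [FiniteDimensional F Z] (b : Z →ₗ[F] Z →ₗ[F] Z)
    (hZinbiel : ∀ x y z : Z, b (b x y) z = b x (b y z) + b x (b z y))
    (C : ℕ → Submodule F Z) (hC0 : C 0 = ⊥) (hCtop : C (Module.finrank F Z) = ⊤)
    (hmono : ∀ i, i < Module.finrank F Z → C i < C (i + 1))
    (hdim : ∀ i ≤ Module.finrank F Z, Module.finrank F (C i) = i)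
    (hideal : ∀ i ≤ Module.finrank F Z, IsIdeal b (C i))
    (A : Submodule F Z) (hab : IsAbelian b A)
    (hdimA : Module.finrank F A + 2 = Module.finrank F Z)
    (halpha : ∀ S : Submodule F Z, IsSubalg b S → IsAbelian b S →
      Module.finrank F S ≤ Module.finrank F A) :
    ∃ B : Submodule F Z, IsIdeal b B ∧ IsAbelian b B ∧
      (Module.finrank F B + 2 = Module.finrank F Z ∨
       Module.finrank F B + 3 = Module.finrank F Z) := by
  have hZ : IsZinbiel b := hZinbiel
  have hC := hZ.isCentralChain hC0 hCtop hmono hdim hideal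
  have hprod : ∀ u v, b u v ∈ map₂ b ⊤ ⊤ := fun u v => apply_mem_map₂ _ mem_top mem_top
  by_cases hZA : map₂ b ⊤ ⊤ ≤ A
  · exact ⟨A, fun z a _ => ⟨hZA (hprod z a), hZA (hprod a z)⟩, hab, Or.inl hdimA⟩
  set K := A ⊔ map₂ b ⊤ ⊤
  have hAK : A ≤ K := le_sup_left
  have hprodK : ∀ u v, b u v ∈ K := fun u v => mem_sup_right (hprod u v)
  have hK : finrank F K = finrank F A + 1 := hC.finrank_sup_map₂_top hC0 hCtop hab hdimA hZA
  have hK2 : ∀ u ∈ K, ∀ v ∈ K, b u v ∈ A := fun u hu v hv =>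
    hC.map₂_le_of_finrank_le hC0 hCtop hab (fun u _ v _ => hprodK u v) (left_lt_sup.mpr hZA)
      hK.le (apply_mem_map₂ _ hu hv)
  obtain ⟨x, -, hxK⟩ := SetLike.exists_of_lt (lt_top_iff_ne_top.mpr fun h : K = ⊤ => by
    rw [h, finrank_top] at hK; omega)
  have hKx : K ⊔ span F {x} = ⊤ :=
    (eq_sup_span_singleton_of_finrank_le le_top mem_top hxK (by rw [finrank_top]; omega)).symm
  by_cases hxA : ∀ a ∈ A, b x a ∈ A
  · refine ⟨A, isIdeal_of_sup_span_singleton hKx ?_ fun a ha => ⟨hxA a ha, ?_⟩, hab, Or.inl hdimA⟩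
    · exact fun k hk a ha => ⟨hK2 k hk a (hAK ha), hK2 a (hAK ha) k hk⟩
    · exact hZ.mul_mem_of_forall_mul_mem hab halpha hAK hK.le hprodK hxA ha
  push Not at hxA
  obtain ⟨a₁, ha₁, hxa₁⟩ := hxA
  have hKA := hZ.forall_mul_eq_zero_of_mul_notMem hab hAK hK.le hprodK ha₁ hxa₁
  refine ⟨_, hZ.isIdeal_inf_comap hab halpha hKx hAK hprodK hK2 hKA,
    fun p hp q hq => hab p hp.1 q hq.1, Or.inr ?_⟩
  have := finrank_inf_comap_add_one hAK hK.le (fun a _ => hprodK x a) ha₁ hxa₁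
  omega
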